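/- If additionally a·h < λ, then the graph G := {(x, y, ψ(x,y)) : (x,y) ∈ [0,π] × [0,y_∞]} ⊆ ℝ³ has finite 2-dimensional Hausdorff measure: H²(G) < ∞. -/

import Mathlib

/-!
Over the strip `y_k ≤ y < y_{k+1}` the function `ψ` is `((h/λ)^k + (h/λ)^(k+1))`-Lipschitz in `x`,
while in `y` it only moves through the monotone factor `φ_k`, so its variation in `y` is at most
`h^k + h^(k+1)`. Covering the graph over each cell of a `δ`-grid by a column of balls of radius
`2δ` shows that the graph of such a function over a `w × H` rectangle has
`H² ≤ 64 w ((2L + 1) H + V)`. For the strip of height `a^(k+1)` this is a combination of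
`(a h / λ)^k`, `a^k` and `h^k`, which is summable because `a h < λ`. Above `y_∞` the function
vanishes, so the remaining segment lies on a flat rectangle.
-/

open Real MeasureTheory Set Filter

noncomputable section

namespace StokesCounterexample

/-- `ySeq a k = Σ_{j=1}^k a^j` (so `ySeq a 0 = 0`). -/
def ySeq (a : ℝ) (k : ℕ) : ℝ := ∑ j ∈ Finset.range k, a ^ (j + 1)

/-- `yInf a = Σ_{j=1}^∞ a^j = a / (1 - a)`. -/
def yInf (a : ℝ) : ℝ := a / (1 - a)

/-- `fSeq h l 0 = 0` and `fSeq h l k x = h^k · sin (x / l^k)` for `k ≥ 1`. -/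
def fSeq (h l : ℝ) (k : ℕ) (x : ℝ) : ℝ :=
  if k = 0 then 0 else h ^ k * Real.sin (x / l ^ k)

open Classical in
/-- The interpolation `ψ(x,y) = (1 - φ_k(y))·f_k(x) + φ_k(y)·f_{k+1}(x)` for
`y ∈ [y_k, y_{k+1})`, where `φ_k(y) = φ((y - y_k)/a^(k+1))`, extended by `0`
outside of `⋃_k [y_k, y_{k+1})` (in particular `ψ(x, y_∞) = 0`). -/
def psi (a h l : ℝ) (φ : ℝ → ℝ) (x y : ℝ) : ℝ :=
  if hk : ∃ k : ℕ, ySeq a k ≤ y ∧ y < ySeq a (k + 1) then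
    (1 - φ ((y - ySeq a hk.choose) / a ^ (hk.choose + 1))) * fSeq h l hk.choose x
      + φ ((y - ySeq a hk.choose) / a ^ (hk.choose + 1)) * fSeq h l (hk.choose + 1) x
  else 0

/-- The partial derivative of `ψ` in the first variable. -/
def psi₁ (a h l : ℝ) (φ : ℝ → ℝ) (x y : ℝ) : ℝ :=
  deriv (fun t => psi a h l φ t y) x

/-- The partial derivative of `ψ` in the second variable. -/
def psi₂ (a h l : ℝ) (φ : ℝ → ℝ) (x y : ℝ) : ℝ :=
  deriv (fun s => psi a h l φ x s) y

/-- The arc length `L(x,y) = ∫_0^x √(1 + (∂₁ψ(t,y))²) dt`. -/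
def arc (a h l : ℝ) (φ : ℝ → ℝ) (x y : ℝ) : ℝ :=
  ∫ t in (0:ℝ)..x, Real.sqrt (1 + psi₁ a h l φ t y ^ 2)

/-- The length `L(y) = L(π, y)` of the section of the graph of `ψ` at height `y`. -/
def len (a h l : ℝ) (φ : ℝ → ℝ) (y : ℝ) : ℝ := arc a h l φ π y

end StokesCounterexample

open scoped ENNReal Topology

section GraphCover

open Finset

def gridCount (T δ : ℝ) : ℕ := ⌊T / δ⌋₊ + 1

theorem gridCount_le {T δ : ℝ} (hδ : 0 < δ) (hT : 0 ≤ T) : (gridCount T δ : ℝ) ≤ T / δ + 1 := by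
  rw [gridCount, Nat.cast_add_one]
  gcongr
  exact Nat.floor_le (by positivity)

theorem gridCount_le_two_mul_div {T δ : ℝ} (hδ : 0 < δ) (hδT : δ ≤ T) :
    (gridCount T δ : ℝ) ≤ 2 * T / δ := by
  have h1 : 1 ≤ T / δ := (one_le_div hδ).mpr hδT
  have h2 := gridCount_le hδ (hδ.le.trans hδT)
  rw [mul_div_assoc]
  linarith

theorem exists_lt_gridCount_mul_le {t T δ : ℝ} (hδ : 0 < δ) (ht : 0 ≤ t) (htT : t ≤ T) :
    ∃ p : ℕ, p < gridCount T δ ∧ p * δ ≤ t ∧ t ≤ p * δ + δ := by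
  refine ⟨⌊t / δ⌋₊, Nat.lt_succ_of_le (Nat.floor_mono (by gcongr)), ?_, ?_⟩
  · exact (le_div_iff₀ hδ).mp (Nat.floor_le (by positivity))
  · have := (div_lt_iff₀ hδ).mp (Nat.lt_floor_add_one (t / δ))
    linarith

theorem EuclideanSpace.dist_le_sqrt_card_mul {ι : Type*} [Fintype ι] {u v : EuclideanSpace ℝ ι}
    {δ : ℝ} (hδ : 0 ≤ δ) (h : ∀ i, |u i - v i| ≤ δ) :
    dist u v ≤ √(Fintype.card ι) * δ := by
  rw [EuclideanSpace.dist_eq, ← Real.sqrt_sq hδ, ← Real.sqrt_mul (Nat.cast_nonneg _)]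
  gcongr
  calc ∑ i, dist (u i) (v i) ^ 2 ≤ ∑ _i : ι, δ ^ 2 :=
        Finset.sum_le_sum fun i _ => by
          rw [Real.dist_eq]; exact pow_le_pow_left₀ (abs_nonneg _) (h i) 2
    _ = Fintype.card ι * δ ^ 2 := by simp

theorem dist_vec3_le {x y z x' y' z' δ : ℝ} (hδ : 0 ≤ δ) (hx : |x - x'| ≤ δ) (hy : |y - y'| ≤ δ)
    (hz : |z - z'| ≤ δ) : dist !₂[x, y, z] !₂[x', y', z'] ≤ 2 * δ := by
  calc dist !₂[x, y, z] !₂[x', y', z'] ≤ √(Fintype.card (Fin 3)) * δ :=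
        EuclideanSpace.dist_le_sqrt_card_mul hδ (by simp [Fin.forall_fin_succ, hx, hy, hz])
    _ ≤ 2 * δ := by
        gcongr
        rw [Real.sqrt_le_left (by norm_num)]
        norm_num

theorem ediam_closedBall_le {X : Type*} [PseudoMetricSpace X] (z : X) {r : ℝ} (hr : 0 ≤ r) :
    Metric.ediam (Metric.closedBall z r) ≤ ENNReal.ofReal (2 * r) := by
  rw [← Metric.closedEBall_ofReal hr, ENNReal.ofReal_mul zero_le_two, ENNReal.ofReal_ofNat]
  exact Metric.ediam_closedEBall_le

theorem hausdorffMeasure_le_of_finset_covers {X : Type*} [MetricSpace X] [MeasurableSpace X]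
    [BorelSpace X] {d M : ℝ} (hd : 0 ≤ d) {s : Set X}
    (h : ∀ᶠ r in 𝓝[>] (0 : ℝ), ∃ Z : Finset X,
      s ⊆ ⋃ z ∈ Z, Metric.closedBall z r ∧ (#Z : ℝ) * (2 * r) ^ d ≤ M) :
    μH[d] s ≤ ENNReal.ofReal M := by
  obtain ⟨U, hU, hUZ⟩ := h.exists_mem
  choose! Z hcover hcount using hUZ
  have hU' : ∀ᶠ r in 𝓝[>] (0 : ℝ), r ∈ U ∧ 0 < r :=
    eventually_of_mem (inter_mem hU self_mem_nhdsWithin) fun r hr => hr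
  have hdiam : Tendsto (fun r : ℝ => ENNReal.ofReal (2 * r)) (𝓝[>] 0) (𝓝 0) := by
    have h := ENNReal.tendsto_ofReal ((continuous_const_mul (2 : ℝ)).tendsto 0)
    rw [mul_zero, ENNReal.ofReal_zero] at h
    exact h.mono_left nhdsWithin_le_nhds
  calc μH[d] s
      ≤ liminf (fun r => ∑ z : Z r, Metric.ediam (Metric.closedBall (z : X) r) ^ d) (𝓝[>] 0) :=
        Measure.hausdorffMeasure_le_liminf_sum d s _ hdiam
          (fun r (z : Z r) => Metric.closedBall z r)
          (hU'.mono fun r hr _ => ediam_closedBall_le _ hr.2.le)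
          (hU'.mono fun r hr => by rw [iUnion_subtype]; exact hcover r hr.1)
    _ ≤ ENNReal.ofReal M := by
      refine liminf_le_of_frequently_le' (hU'.mono fun r ⟨hrU, hr0⟩ => ?_).frequently
      calc ∑ z : Z r, Metric.ediam (Metric.closedBall (z : X) r) ^ d
          ≤ ∑ _z : Z r, ENNReal.ofReal (2 * r) ^ d :=
            Finset.sum_le_sum fun z _ => ENNReal.rpow_le_rpow (ediam_closedBall_le _ hr0.le) hd
        _ = ENNReal.ofReal ((#(Z r) : ℝ) * (2 * r) ^ d) := by
            rw [Finset.sum_const, Finset.card_univ, Fintype.card_coe, nsmul_eq_mul,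
              ENNReal.ofReal_rpow_of_nonneg (by positivity) hd,
              ENNReal.ofReal_mul (Nat.cast_nonneg _), ENNReal.ofReal_natCast]
        _ ≤ ENNReal.ofReal M := ENNReal.ofReal_le_ofReal (hcount r hrU)

def graph3 (g : ℝ → ℝ → ℝ) (s : Set (ℝ × ℝ)) : Set (EuclideanSpace ℝ (Fin 3)) :=
  (fun q => !₂[q.1, q.2, g q.1 q.2]) '' s

section GraphNet

variable (g : ℝ → ℝ → ℝ) (τ : ℝ → ℝ) (x₀ y₀ L δ : ℝ)

def cellSpread (m : ℕ) : ℝ := L * δ + (τ (y₀ + (m + 1) * δ) - τ (y₀ + m * δ))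

def cellCenter (i m p : ℕ) : EuclideanSpace ℝ (Fin 3) :=
  !₂[x₀ + i * δ, y₀ + m * δ, g (x₀ + i * δ) (y₀ + m * δ) - cellSpread τ y₀ L δ m + p * δ]

/- On the grid cell with corner `(x₀ + i δ, y₀ + m δ)` the values of `g` stay within
`cellSpread m` of the value at the corner, so a column of `δ`-spaced centres above the corner
covers that part of the graph by balls of radius `2δ`. -/
open Classical in
def graphNet (w H : ℝ) : Finset (EuclideanSpace ℝ (Fin 3)) :=
  (range (gridCount w δ) ×ˢ range (gridCount H δ)).biUnion fun im =>
    (range (gridCount (2 * cellSpread τ y₀ L δ im.2) δ)).image (cellCenter g τ x₀ y₀ L δ im.1 im.2)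

variable {g τ x₀ y₀ L δ} {w H V : ℝ}

theorem graph3_subset_graphNet (hδ : 0 < δ) (hL : 0 ≤ L) (hτ : Monotone τ)
    (hg : ∀ x ∈ Icc x₀ (x₀ + w), ∀ x' ∈ Icc x₀ (x₀ + w), ∀ y ∈ Ico y₀ (y₀ + H),
      ∀ y' ∈ Ico y₀ (y₀ + H), y ≤ y' → |g x' y' - g x y| ≤ L * |x' - x| + (τ y' - τ y)) :
    graph3 g (Icc x₀ (x₀ + w) ×ˢ Ico y₀ (y₀ + H)) ⊆
      ⋃ z ∈ graphNet g τ x₀ y₀ L δ w H, Metric.closedBall z (2 * δ) := by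
  rintro _ ⟨⟨x, y⟩, ⟨⟨hx₀, hxw⟩, hy₀, hyH⟩, rfl⟩
  dsimp only at hx₀ hxw hy₀ hyH
  obtain ⟨i, hi, hix, hxi⟩ :=
    exists_lt_gridCount_mul_le (t := x - x₀) (T := w) hδ (by linarith) (by linarith)
  obtain ⟨m, hm, hmy, hym⟩ :=
    exists_lt_gridCount_mul_le (t := y - y₀) (T := H) hδ (by linarith) (by linarith)
  have hiδ : 0 ≤ (i : ℝ) * δ := by positivity
  have hmδ : 0 ≤ (m : ℝ) * δ := by positivity
  set R := cellSpread τ y₀ L δ m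
  have hspread : |g x y - g (x₀ + i * δ) (y₀ + m * δ)| ≤ R := by
    calc |g x y - g (x₀ + i * δ) (y₀ + m * δ)|
        ≤ L * |x - (x₀ + i * δ)| + (τ y - τ (y₀ + m * δ)) :=
          hg _ ⟨by linarith, by linarith⟩ _ ⟨hx₀, hxw⟩ _ ⟨by linarith, by linarith⟩ _
            ⟨hy₀, hyH⟩ (by linarith)
      _ ≤ L * δ + (τ (y₀ + (m + 1) * δ) - τ (y₀ + m * δ)) := by
          gcongr
          · rw [abs_le]; constructor <;> linarith
          · exact hτ (by linarith)
  obtain ⟨p, hp, hpz, hzp⟩ :=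
    exists_lt_gridCount_mul_le (t := g x y - (g (x₀ + i * δ) (y₀ + m * δ) - R)) (T := 2 * R) hδ
      (by linarith [(abs_le.mp hspread).1]) (by linarith [(abs_le.mp hspread).2])
  refine mem_iUnion₂.mpr ⟨cellCenter g τ x₀ y₀ L δ i m p, ?_, ?_⟩
  · exact mem_biUnion.mpr ⟨(i, m), mem_product.mpr ⟨mem_range.mpr hi, mem_range.mpr hm⟩,
      mem_image.mpr ⟨p, mem_range.mpr hp, rfl⟩⟩
  · refine Metric.mem_closedBall.mpr (dist_vec3_le hδ.le ?_ ?_ ?_) <;>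
      rw [abs_le] <;> constructor <;> linarith

theorem sum_cellSpread (N : ℕ) :
    ∑ m ∈ range N, cellSpread τ y₀ L δ m = N * (L * δ) + (τ (y₀ + N * δ) - τ y₀) := by
  have h := Finset.sum_range_sub (fun m : ℕ => τ (y₀ + m * δ)) N
  push_cast at h
  simp only [cellSpread, sum_add_distrib, sum_const, card_range, nsmul_eq_mul, h, zero_mul,
    add_zero]

theorem card_graphNet_mul_le (hδ : 0 < δ) (hδw : δ ≤ w) (hδH : δ ≤ H) (hL : 0 ≤ L)
    (hτ : Monotone τ) (hτV : ∀ y, τ y ∈ Icc 0 V) :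
    (#(graphNet g τ x₀ y₀ L δ w H) : ℝ) * (4 * δ) ^ 2 ≤ 64 * w * ((2 * L + 1) * H + V) := by
  classical
  have hcard : (#(graphNet g τ x₀ y₀ L δ w H) : ℝ) ≤
      gridCount w δ *
        ∑ m ∈ range (gridCount H δ), (gridCount (2 * cellSpread τ y₀ L δ m) δ : ℝ) := by
    have : #(graphNet g τ x₀ y₀ L δ w H) ≤
        ∑ im ∈ range (gridCount w δ) ×ˢ range (gridCount H δ),
          gridCount (2 * cellSpread τ y₀ L δ im.2) δ :=
      card_biUnion_le.trans (sum_le_sum fun im _ => card_image_le.trans (card_range _).le)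
    simp only [sum_product, sum_const, card_range, smul_eq_mul] at this
    exact_mod_cast this
  have hspread : ∀ m, 0 ≤ cellSpread τ y₀ L δ m := fun m =>
    add_nonneg (by positivity) (sub_nonneg.mpr (hτ (by gcongr; linarith)))
  have hrows : ∑ m ∈ range (gridCount H δ), (gridCount (2 * cellSpread τ y₀ L δ m) δ : ℝ) ≤
      (2 * L + 1) * gridCount H δ + 2 * V / δ := by
    set N := gridCount H δ
    calc ∑ m ∈ range N, (gridCount (2 * cellSpread τ y₀ L δ m) δ : ℝ)
        ≤ ∑ m ∈ range N, (2 * cellSpread τ y₀ L δ m / δ + 1) :=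
          sum_le_sum fun m _ => gridCount_le hδ (by linarith [hspread m])
      _ = 2 / δ * (N * (L * δ)) + 2 / δ * (τ (y₀ + N * δ) - τ y₀) + N := by
          rw [← mul_add, ← sum_cellSpread, mul_sum, sum_add_distrib, sum_const, card_range,
            nsmul_eq_mul, mul_one]
          exact congrArg (· + _) (sum_congr rfl fun m _ => by ring)
      _ ≤ 2 * L * N + 2 / δ * V + N := by
          have hτ' : τ (y₀ + N * δ) - τ y₀ ≤ V := by linarith [(hτV (y₀ + N * δ)).2, (hτV y₀).1]
          have hLN : 2 / δ * (N * (L * δ)) = 2 * L * N := by field_simp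
          rw [hLN]
          gcongr
      _ = (2 * L + 1) * N + 2 * V / δ := by ring
  have hNx : (gridCount w δ : ℝ) ≤ 2 * w / δ := gridCount_le_two_mul_div hδ hδw
  have hNy : (gridCount H δ : ℝ) ≤ 2 * H / δ := gridCount_le_two_mul_div hδ hδH
  have hw : 0 ≤ w := hδ.le.trans hδw
  calc (#(graphNet g τ x₀ y₀ L δ w H) : ℝ) * (4 * δ) ^ 2
      ≤ gridCount w δ * ((2 * L + 1) * gridCount H δ + 2 * V / δ) * (4 * δ) ^ 2 := by
        gcongr
        exact hcard.trans (by gcongr)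
    _ ≤ 2 * w / δ * ((2 * L + 1) * (2 * H / δ) + 2 * V / δ) * (4 * δ) ^ 2 := by
        have hV : 0 ≤ V := (hτV 0).1.trans (hτV 0).2
        gcongr
    _ = 64 * w * ((2 * L + 1) * H + V) := by
        field_simp
        ring

theorem hausdorffMeasure_graph3_le (hw : 0 < w) (hH : 0 < H) (hL : 0 ≤ L) (hτ : Monotone τ)
    (hτV : ∀ y, τ y ∈ Icc 0 V)
    (hg : ∀ x ∈ Icc x₀ (x₀ + w), ∀ x' ∈ Icc x₀ (x₀ + w), ∀ y ∈ Ico y₀ (y₀ + H),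
      ∀ y' ∈ Ico y₀ (y₀ + H), y ≤ y' → |g x' y' - g x y| ≤ L * |x' - x| + (τ y' - τ y)) :
    μH[2] (graph3 g (Icc x₀ (x₀ + w) ×ˢ Ico y₀ (y₀ + H))) ≤
      ENNReal.ofReal (64 * w * ((2 * L + 1) * H + V)) := by
  refine hausdorffMeasure_le_of_finset_covers zero_le_two ?_
  have hsmall : Ioo 0 (2 * min w H) ∈ 𝓝[>] (0 : ℝ) :=
    Ioo_mem_nhdsGT (by positivity)
  filter_upwards [hsmall] with r ⟨hr0, hr⟩
  have hδ : 0 < r / 2 := half_pos hr0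
  refine ⟨graphNet g τ x₀ y₀ L (r / 2) w H, ?_, ?_⟩
  · simpa only [mul_div_cancel₀ r two_ne_zero] using graph3_subset_graphNet hδ hL hτ hg
  · rw [Real.rpow_two, show 2 * r = 4 * (r / 2) by ring]
    exact card_graphNet_mul_le hδ (by linarith [min_le_left w H]) (by linarith [min_le_right w H])
      hL hτ hτV

end GraphNet

end GraphCover

namespace StokesCounterexample

variable {a h l : ℝ} {φ : ℝ → ℝ}

theorem hasSum_yInf (ha0 : 0 ≤ a) (ha1 : a < 1) : HasSum (fun j : ℕ => a ^ (j + 1)) (yInf a) := by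
  simpa [pow_succ', yInf, div_eq_mul_inv] using (hasSum_geometric_of_lt_one ha0 ha1).mul_left a

theorem ySeq_succ (k : ℕ) : ySeq a (k + 1) = ySeq a k + a ^ (k + 1) :=
  Finset.sum_range_succ _ _

theorem ySeq_strictMono (ha0 : 0 < a) : StrictMono (ySeq a) :=
  strictMono_nat_of_lt_succ fun k => by
    rw [ySeq_succ]
    exact lt_add_of_pos_right _ (pow_pos ha0 _)

theorem ySeq_le_yInf (ha0 : 0 ≤ a) (ha1 : a < 1) (k : ℕ) : ySeq a k ≤ yInf a :=
  sum_le_hasSum _ (fun _ _ => pow_nonneg ha0 _) (hasSum_yInf ha0 ha1)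

theorem Icc_zero_yInf_subset (ha0 : 0 < a) (ha1 : a < 1) :
    Icc 0 (yInf a) ⊆ (⋃ k, Ico (ySeq a k) (ySeq a (k + 1))) ∪ Ico (yInf a) (yInf a + 1) := by
  classical
  rintro y ⟨hy0, hy⟩
  rcases hy.lt_or_eq with hy | rfl
  · have hex : ∃ K, y < ySeq a K :=
      ((hasSum_yInf ha0.le ha1).tendsto_sum_nat.eventually (lt_mem_nhds hy)).exists
    obtain ⟨k, hk⟩ := Nat.exists_eq_succ_of_ne_zero (n := Nat.find hex) fun h0 => by
      have := Nat.find_spec hex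
      rw [h0, ySeq, Finset.sum_range_zero] at this
      linarith
    refine Or.inl (mem_iUnion.mpr ⟨k, not_lt.mp (Nat.find_min hex ?_), ?_⟩)
    · omega
    · simpa only [hk] using Nat.find_spec hex
  · exact Or.inr ⟨le_rfl, by linarith⟩

theorem psi_eq_of_mem_Ico (ha0 : 0 < a) {k : ℕ} {y : ℝ} (hy : y ∈ Ico (ySeq a k) (ySeq a (k + 1)))
    (x : ℝ) :
    psi a h l φ x y = (1 - φ ((y - ySeq a k) / a ^ (k + 1))) * fSeq h l k x
      + φ ((y - ySeq a k) / a ^ (k + 1)) * fSeq h l (k + 1) x := by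
  have hex : ∃ k : ℕ, ySeq a k ≤ y ∧ y < ySeq a (k + 1) := ⟨k, hy⟩
  have hk : hex.choose = k := by
    by_contra hne
    exact ((ySeq_strictMono ha0).monotone.pairwise_disjoint_on_Ico_succ hne).le_bot
      ⟨hex.choose_spec, hy⟩
  rw [psi, dif_pos hex, hk]

theorem psi_eq_zero_of_yInf_le (ha0 : 0 ≤ a) (ha1 : a < 1) {y : ℝ} (hy : yInf a ≤ y) (x : ℝ) :
    psi a h l φ x y = 0 := by
  rw [psi, dif_neg]
  rintro ⟨k, -, hk⟩
  linarith [ySeq_le_yInf ha0 ha1 (k + 1)]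

theorem abs_fSeq_le (hh0 : 0 ≤ h) (k : ℕ) (x : ℝ) : |fSeq h l k x| ≤ h ^ k := by
  rw [fSeq]
  split_ifs
  · simpa using pow_nonneg hh0 k
  · rw [abs_mul, abs_of_nonneg (pow_nonneg hh0 k)]
    exact mul_le_of_le_one_right (pow_nonneg hh0 k) (abs_sin_le_one _)

theorem abs_fSeq_sub_le (hh0 : 0 ≤ h) (hl0 : 0 < l) (k : ℕ) (x x' : ℝ) :
    |fSeq h l k x' - fSeq h l k x| ≤ (h / l) ^ k * |x' - x| := by
  rw [fSeq, fSeq]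
  split_ifs
  · simpa using mul_nonneg (pow_nonneg (div_nonneg hh0 hl0.le) k) (abs_nonneg (x' - x))
  · rw [← mul_sub, abs_mul, abs_of_nonneg (pow_nonneg hh0 k), div_pow, div_mul_eq_mul_div,
      mul_div_assoc]
    gcongr
    calc |sin (x' / l ^ k) - sin (x / l ^ k)| ≤ |x' / l ^ k - x / l ^ k| := abs_sin_sub_sin_le _ _
      _ = |x' - x| / l ^ k := by rw [← sub_div, abs_div, abs_of_pos (pow_pos hl0 k)]

theorem abs_lerp_sub_lerp_le {t t' u u' v v' α β γ : ℝ} (ht' : t' ∈ Icc 0 1) (htt' : t ≤ t')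
    (hu : |u' - u| ≤ α) (hv : |v' - v| ≤ β) (huv : |v - u| ≤ γ) :
    |((1 - t') * u' + t' * v') - ((1 - t) * u + t * v)| ≤ α + β + (t' - t) * γ := by
  obtain ⟨ht'0, ht'1⟩ := ht'
  have hsplit : ((1 - t') * u' + t' * v') - ((1 - t) * u + t * v)
      = (1 - t') * (u' - u) + t' * (v' - v) + (t' - t) * (v - u) := by ring
  rw [hsplit]
  refine (abs_add_three _ _ _).trans ?_
  rw [abs_mul, abs_mul, abs_mul, abs_of_nonneg (sub_nonneg.mpr ht'1), abs_of_nonneg ht'0,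
    abs_of_nonneg (sub_nonneg.mpr htt')]
  gcongr
  · exact (mul_le_of_le_one_left (abs_nonneg _) (by linarith)).trans hu
  · exact (mul_le_of_le_one_left (abs_nonneg _) ht'1).trans hv

theorem abs_psi_sub_le (ha0 : 0 < a) (hh0 : 0 ≤ h) (hl0 : 0 < l) (hφmono : Monotone φ)
    (hφ01 : ∀ t, φ t ∈ Icc 0 1) {k : ℕ} {y y' : ℝ} (hy : y ∈ Ico (ySeq a k) (ySeq a (k + 1)))
    (hy' : y' ∈ Ico (ySeq a k) (ySeq a (k + 1))) (hyy' : y ≤ y') (x x' : ℝ) :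
    |psi a h l φ x' y' - psi a h l φ x y| ≤
      ((h / l) ^ k + (h / l) ^ (k + 1)) * |x' - x| +
        ((h ^ k + h ^ (k + 1)) * φ ((y' - ySeq a k) / a ^ (k + 1))
          - (h ^ k + h ^ (k + 1)) * φ ((y - ySeq a k) / a ^ (k + 1))) := by
  rw [psi_eq_of_mem_Ico ha0 hy', psi_eq_of_mem_Ico ha0 hy]
  have hφ : φ ((y - ySeq a k) / a ^ (k + 1)) ≤ φ ((y' - ySeq a k) / a ^ (k + 1)) :=
    hφmono (div_le_div_of_nonneg_right (by linarith) (pow_nonneg ha0.le _))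
  have hγ : |fSeq h l (k + 1) x - fSeq h l k x| ≤ h ^ (k + 1) + h ^ k :=
    (abs_sub _ _).trans (add_le_add (abs_fSeq_le hh0 _ _) (abs_fSeq_le hh0 _ _))
  refine (abs_lerp_sub_lerp_le (hφ01 _) hφ (abs_fSeq_sub_le hh0 hl0 k x x')
    (abs_fSeq_sub_le hh0 hl0 (k + 1) x x') hγ).trans (le_of_eq ?_)
  ring

def stripBound (a h l : ℝ) (k : ℕ) : ℝ :=
  64 * π * ((2 * ((h / l) ^ k + (h / l) ^ (k + 1)) + 1) * a ^ (k + 1) + (h ^ k + h ^ (k + 1)))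

theorem hausdorffMeasure_graph3_strip_le (ha0 : 0 < a) (hh0 : 0 ≤ h) (hl0 : 0 < l)
    (hφmono : Monotone φ) (hφ01 : ∀ t, φ t ∈ Icc 0 1) (k : ℕ) :
    μH[2] (graph3 (psi a h l φ) (Icc 0 π ×ˢ Ico (ySeq a k) (ySeq a (k + 1)))) ≤
      ENNReal.ofReal (stripBound a h l k) := by
  have hV : 0 ≤ h ^ k + h ^ (k + 1) := by positivity
  have hL : 0 ≤ (h / l) ^ k + (h / l) ^ (k + 1) := by
    have := div_nonneg hh0 hl0.le
    positivity
  have hτ : Monotone fun y => (h ^ k + h ^ (k + 1)) * φ ((y - ySeq a k) / a ^ (k + 1)) :=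
    (hφmono.comp fun y y' hyy' =>
      div_le_div_of_nonneg_right (sub_le_sub_right hyy' _) (pow_nonneg ha0.le _)).const_mul hV
  have key := hausdorffMeasure_graph3_le (g := psi a h l φ) (x₀ := 0) (y₀ := ySeq a k)
    pi_pos (pow_pos ha0 (k + 1)) hL hτ
    (fun y => ⟨mul_nonneg hV (hφ01 _).1, mul_le_of_le_one_right hV (hφ01 _).2⟩)
    (fun x _ x' _ y hy y' hy' hyy' => abs_psi_sub_le ha0 hh0 hl0 hφmono hφ01
      (by rwa [ySeq_succ]) (by rwa [ySeq_succ]) hyy' x x')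
  rwa [zero_add, ← ySeq_succ] at key

theorem summable_stripBound (ha0 : 0 < a) (ha1 : a < 1) (hh0 : 0 ≤ h) (hh1 : h < 1) (hl0 : 0 < l)
    (hahl : a * h < l) : Summable (stripBound a h l) := by
  have hgeom : stripBound a h l = fun k =>
      64 * π * (2 * a * (1 + h / l) * (a * h / l) ^ k + a * a ^ k + (1 + h) * h ^ k) := by
    funext k
    simp only [stripBound, div_pow, mul_pow, pow_succ]
    field_simp
  rw [hgeom]
  refine ((((summable_geometric_of_lt_one (by positivity) ((div_lt_one hl0).mpr hahl)).mul_left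
    _).add ((summable_geometric_of_lt_one ha0.le ha1).mul_left a)).add
      ((summable_geometric_of_lt_one hh0 hh1).mul_left _)).mul_left _

theorem hausdorffMeasure_graph3_top_le (ha0 : 0 ≤ a) (ha1 : a < 1) :
    μH[2] (graph3 (psi a h l φ) (Icc 0 π ×ˢ Ico (yInf a) (yInf a + 1))) ≤
      ENNReal.ofReal (64 * π) := by
  have key := hausdorffMeasure_graph3_le (g := psi a h l φ) (x₀ := 0) (y₀ := yInf a)
    (τ := fun _ => 0) (L := 0) (V := 0) pi_pos one_pos le_rfl monotone_const
    (fun _ => ⟨le_rfl, le_rfl⟩)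
    (fun x _ x' _ y hy y' hy' _ => by
      simp [psi_eq_zero_of_yInf_le ha0 ha1 hy.1, psi_eq_zero_of_yInf_le ha0 ha1 hy'.1])
  simpa using key

theorem hausdorff_measure_graph_lt_top_general (a h l : ℝ) (ha0 : 0 < a) (ha1 : a < 1) (hh0 : 0 < h) (hh1 : h < 1)
    (hl0 : 0 < l)
    (φ : ℝ → ℝ) (hφmono : Monotone φ)
    (hφ01 : ∀ t, φ t ∈ Set.Icc (0:ℝ) 1)
    (hahl : a * h < l) :
    μH[2] ((fun q : ℝ × ℝ =>
        ((WithLp.equiv 2 (Fin 3 → ℝ)).symm ![q.1, q.2, psi a h l φ q.1 q.2] :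
          EuclideanSpace ℝ (Fin 3))) ''
      (Icc 0 π ×ˢ Icc 0 (yInf a))) < ⊤ := by
  let G := graph3 (psi a h l φ)
  have hsub : Icc 0 π ×ˢ Icc 0 (yInf a) ⊆
      (⋃ k, Icc 0 π ×ˢ Ico (ySeq a k) (ySeq a (k + 1))) ∪ Icc 0 π ×ˢ Ico (yInf a) (yInf a + 1) := by
    rw [← prod_iUnion, ← prod_union]
    exact prod_mono le_rfl (Icc_zero_yInf_subset ha0 ha1)
  have hstrips : ∑' k, μH[2] (G (Icc 0 π ×ˢ Ico (ySeq a k) (ySeq a (k + 1)))) < ⊤ :=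
    (ENNReal.tsum_le_tsum fun k => hausdorffMeasure_graph3_strip_le ha0 hh0.le hl0 hφmono hφ01
      k).trans_lt (summable_stripBound ha0 ha1 hh0.le hh1 hl0 hahl).tsum_ofReal_lt_top
  calc μH[2] (G (Icc 0 π ×ˢ Icc 0 (yInf a)))
      ≤ μH[2] ((⋃ k, G (Icc 0 π ×ˢ Ico (ySeq a k) (ySeq a (k + 1))))
          ∪ G (Icc 0 π ×ˢ Ico (yInf a) (yInf a + 1))) := by
        refine measure_mono ?_
        simp only [G, graph3, ← image_iUnion, ← image_union]
        exact image_mono hsub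
    _ ≤ ∑' k, μH[2] (G (Icc 0 π ×ˢ Ico (ySeq a k) (ySeq a (k + 1))))
          + μH[2] (G (Icc 0 π ×ˢ Ico (yInf a) (yInf a + 1))) :=
        (measure_union_le _ _).trans (add_le_add_left (measure_iUnion_le _) _)
    _ < ⊤ := ENNReal.add_lt_top.mpr
        ⟨hstrips, (hausdorffMeasure_graph3_top_le ha0.le ha1).trans_lt ENNReal.ofReal_lt_top⟩

/-- If moreover `a·h < λ`, then the graph of `ψ` over `[0,π] × [0,y_∞]`, viewed as a
subset of Euclidean `ℝ³`, has finite `2`-dimensional Hausdorff measure. -/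
theorem hausdorff_measure_graph_lt_top (a h l : ℝ) (ha0 : 0 < a) (ha1 : a < 1) (hh0 : 0 < h) (hh1 : h < 1)
    (hl0 : 0 < l) (hl1 : l < 1) (hlN : ∃ N : ℕ, 0 < N ∧ l = 1 / N)
    (φ : ℝ → ℝ) (hφsmooth : ContDiff ℝ (⊤ : ℕ∞) φ) (hφmono : Monotone φ)
    (hφ01 : ∀ t, φ t ∈ Set.Icc (0:ℝ) 1)
    (hφd0 : ∀ t, 0 ≤ deriv φ t) (hφd2 : ∀ t, deriv φ t ≤ 2)
    (hφ0 : ∃ ε > 0, ∀ t < ε, φ t = 0) (hφ1 : ∃ ε > 0, ∀ t > 1 - ε, φ t = 1)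
    (hahl : a * h < l) :
    μH[2] ((fun q : ℝ × ℝ =>
        ((WithLp.equiv 2 (Fin 3 → ℝ)).symm ![q.1, q.2, psi a h l φ q.1 q.2] :
          EuclideanSpace ℝ (Fin 3))) ''
      (Icc 0 π ×ˢ Icc 0 (yInf a))) < ⊤ :=
  hausdorff_measure_graph_lt_top_general a h l ha0 ha1 hh0 hh1 hl0 φ hφmono hφ01 hahl

end StokesCounterexample
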